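/- arXiv:1612.02197 — 2 statements merged into one kernel-verified Lean document; each statement's English description precedes it below -/
import Mathlib

section
/- Let X be a compact complex manifold with hermitian metric, f: X → Y a non-degenerate holomorphic map to a compact complex manifold Y, and suppose H⁰(X, T_X) = 0. Then the space D'_{X/Y} := {(ξ,ϑ) ∈ A^{0,0}(f*T_Y) × A^{0,1}(T_X) : ∂̄ξ = f_*ϑ, ∂̄ϑ = 0} / {(f_*ζ, ∂̄ζ) : ζ ∈ A^{0,0}(T_X)} is isomorphic to H_{X/Y} := {χ ∈ A^{0,0}(f*T_Y) : ∂̄χ ∈ f_*(ℋ^{0,1}(X,T_X))}, where ℋ^{0,1}(X,T_X) denotes the harmonic representatives. -/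
/-- **Horikawa's space `D'_{X/Y}` via generalized harmonic representatives.**
Let `X` be a compact hermitian manifold, `f : X → Y` a non-degenerate holomorphic
map (so the pushforward `f_*` on vector fields and `(0,1)`-forms is injective), and
suppose `H⁰(X, T_X) = 0`.  The Dolbeault data are modelled by:
`A00X = A^{0,0}(T_X)`, `A01X = A^{0,1}(T_X)`, `A02X = A^{0,2}(T_X)`,
`A00Y = A^{0,0}(f*T_Y)`, `A01Y = A^{0,1}(f*T_Y)`, the operators `∂̄` on each,
the pushforwards `f₀`, `f₁`, and the subspace `Harm = ℋ^{0,1}(X, T_X)` of harmonic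
forms, every `∂̄`-closed form being uniquely `harmonic + ∂̄-exact` (Hodge theory).
Then
`D'_{X/Y} = {(ξ,ϑ) : ∂̄ξ = f_*ϑ, ∂̄ϑ = 0} / {(f_*ζ, ∂̄ζ)}`
is isomorphic to
`H_{X/Y} = {χ ∈ A^{0,0}(f*T_Y) : ∂̄χ ∈ f_*(ℋ^{0,1}(X, T_X))}`. -/
theorem horikawa_space_iso_harmonic
    {A00X A01X A02X A00Y A01Y : Type*}
    [AddCommGroup A00X] [Module ℂ A00X] [AddCommGroup A01X] [Module ℂ A01X]
    [AddCommGroup A02X] [Module ℂ A02X] [AddCommGroup A00Y] [Module ℂ A00Y]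
    [AddCommGroup A01Y] [Module ℂ A01Y]
    (dX : A00X →ₗ[ℂ] A01X) (dX1 : A01X →ₗ[ℂ] A02X) (dY : A00Y →ₗ[ℂ] A01Y)
    (f0 : A00X →ₗ[ℂ] A00Y) (f1 : A01X →ₗ[ℂ] A01Y)
    (hf0 : Function.Injective f0) (hf1 : Function.Injective f1)
    (hcomm : dY ∘ₗ f0 = f1 ∘ₗ dX)        -- `∂̄ ∘ f_* = f_* ∘ ∂̄`
    (hcx : dX1 ∘ₗ dX = 0)                 -- `∂̄ ∘ ∂̄ = 0`
    (Harm : Submodule ℂ A01X)             -- `ℋ^{0,1}(X, T_X)`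
    (hHclosed : ∀ h ∈ Harm, dX1 h = 0)
    (hHodge : ∀ ϑ : A01X, dX1 ϑ = 0 → ∃ h ∈ Harm, ∃ ζ : A00X, ϑ = h + dX ζ)
    (hHunique : ∀ h ∈ Harm, (∃ ζ : A00X, h = dX ζ) → h = 0)
    (hH0 : ∀ ζ : A00X, dX ζ = 0 → ζ = 0)  -- `H⁰(X, T_X) = 0`
    :
    -- `Z` = the cocycle space `{(ξ,ϑ) : ∂̄ξ = f₁ ϑ, ∂̄ϑ = 0}`,
    -- `B` = the coboundaries `{(f₀ ζ, ∂̄ζ)}`, and `D'_{X/Y} = Z ⧸ B ≅ H_{X/Y}`.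
    let Z : Submodule ℂ (A00Y × A01X) :=
      LinearMap.ker (dY ∘ₗ LinearMap.fst ℂ A00Y A01X -
          f1 ∘ₗ LinearMap.snd ℂ A00Y A01X) ⊓
        LinearMap.ker (dX1 ∘ₗ LinearMap.snd ℂ A00Y A01X)
    let B : Submodule ℂ Z :=
      Submodule.comap Z.subtype (LinearMap.range (f0.prod dX))
    Nonempty ((Z ⧸ B) ≃ₗ[ℂ] ↥(Submodule.comap dY (Harm.map f1))) := by
  intro Z B
  classical
  set H := Submodule.comap dY (Harm.map f1) with hHdef
  have hcomm' : ∀ ζ, dY (f0 ζ) = f1 (dX ζ) := fun ζ => congrFun (congrArg DFunLike.coe hcomm) ζ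
  -- unique harmonic lift
  have key : ∀ χ : H, ∃ h : A01X, h ∈ Harm ∧ f1 h = dY (χ : A00Y) := by
    intro χ
    obtain ⟨h, hh, hfh⟩ := Submodule.mem_map.mp χ.2
    exact ⟨h, hh, hfh⟩
  choose hfun hmem hf using key
  have huniq : ∀ (χ : H) (h : A01X), h ∈ Harm → f1 h = dY (χ : A00Y) → h = hfun χ := by
    intro χ h _ hfh
    exact hf1 (hfh.trans (hf χ).symm)
  -- membership in Z
  have memZ : ∀ χ : H, ((χ : A00Y), hfun χ) ∈ Z := by
    intro χ
    refine Submodule.mem_inf.mpr ⟨?_, ?_⟩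
    · simp [LinearMap.mem_ker, LinearMap.sub_apply, hf χ]
    · simp [LinearMap.mem_ker, hHclosed _ (hmem χ)]
  -- the linear map ψ : H → Z ⧸ B
  have hadd : ∀ χ χ' : H, hfun (χ + χ') = hfun χ + hfun χ' := by
    intro χ χ'
    refine (huniq (χ + χ') _ (Harm.add_mem (hmem χ) (hmem χ')) ?_).symm
    simp [hf χ, hf χ']
  have hsmul : ∀ (c : ℂ) (χ : H), hfun (c • χ) = c • hfun χ := by
    intro c χ
    refine (huniq (c • χ) _ (Harm.smul_mem c (hmem χ)) ?_).symm
    simp [hf χ]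
  let ψ : H →ₗ[ℂ] (Z ⧸ B) :=
    { toFun := fun χ => B.mkQ ⟨((χ : A00Y), hfun χ), memZ χ⟩
      map_add' := by
        intro χ χ'
        rw [← map_add]
        exact congrArg B.mkQ (Subtype.ext (Prod.ext_iff.mpr ⟨rfl, hadd χ χ'⟩))
      map_smul' := by
        intro c χ
        rw [RingHom.id_apply, ← map_smul]
        exact congrArg B.mkQ (Subtype.ext (Prod.ext_iff.mpr ⟨rfl, hsmul c χ⟩)) }
  have hinj : Function.Injective ψ := by
    rw [← LinearMap.ker_eq_bot]
    refine LinearMap.ker_eq_bot'.mpr ?_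
    intro χ hχ
    have hB : (⟨((χ : A00Y), hfun χ), memZ χ⟩ : Z) ∈ B :=
      (Submodule.Quotient.mk_eq_zero B).mp hχ
    obtain ⟨ζ, hζ⟩ := hB
    have h1 : f0 ζ = (χ : A00Y) := congrArg Prod.fst hζ
    have h2 : dX ζ = hfun χ := congrArg Prod.snd hζ
    have h0 : hfun χ = 0 := hHunique _ (hmem χ) ⟨ζ, h2.symm⟩
    have hζ0 : ζ = 0 := hH0 ζ (by rw [h2, h0])
    refine Subtype.ext ?_
    rw [← h1, hζ0]
    simp
  have hsurj : Function.Surjective ψ := by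
    intro q
    obtain ⟨z, rfl⟩ := Submodule.Quotient.mk_surjective B q
    obtain ⟨hz1', hz2'⟩ := Submodule.mem_inf.mp z.2
    have hz1 : dY z.1.1 = f1 z.1.2 := by
      have := LinearMap.mem_ker.mp hz1'
      simpa [sub_eq_zero] using this
    have hz2 : dX1 z.1.2 = 0 := LinearMap.mem_ker.mp hz2'
    obtain ⟨h, hh, ζ, hϑ⟩ := hHodge z.1.2 hz2
    have hχmem : z.1.1 - f0 ζ ∈ H := by
      refine Submodule.mem_comap.mpr (Submodule.mem_map.mpr ⟨h, hh, ?_⟩)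
      rw [map_sub, hz1, hcomm' ζ, hϑ, map_add, add_sub_cancel_right]
    set χH : H := ⟨z.1.1 - f0 ζ, hχmem⟩ with hχH
    have hfh : hfun χH = h := by
      refine (huniq _ h hh ?_).symm
      show f1 h = dY (z.1.1 - f0 ζ)
      rw [map_sub, hz1, hcomm' ζ, hϑ, map_add, add_sub_cancel_right]
    refine ⟨χH, ?_⟩
    show B.mkQ ⟨((χH : A00Y), hfun χH), memZ χH⟩ = B.mkQ z
    rw [Submodule.mkQ_apply, Submodule.mkQ_apply, Submodule.Quotient.eq]
    refine ⟨-ζ, ?_⟩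
    refine Prod.ext ?_ ?_
    · show f0 (-ζ) = (z.1.1 - f0 ζ) - z.1.1
      simp
    · show dX (-ζ) = hfun χH - z.1.2
      rw [hfh, hϑ]
      simp
  exact ⟨(LinearEquiv.ofBijective ψ ⟨hinj, hsurj⟩).symm⟩
end

section
/- Let (β,f): 𝒳 → Y × S be an effectively parametrized holomorphic family of coverings of compact hyperbolic Riemann surfaces over Y. Then the Weil-Petersson pairing G^{WP}_{ss̄}(s) = ∫_{X_s}(□+1)⁻¹(‖μ_s‖²) β_s*ω_Y + ∫_{X_s}‖u_s‖² ω_{X_s} is positive definite: if G^{WP}_{ss̄}(s) = 0 for a tangent vector ∂_s, then ∂_s = 0. -/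
open MeasureTheory

/-- **Positive definiteness of the generalized Weil–Petersson pairing.**
Let `(β, f) : 𝒳 → Y × S` be an effectively parametrized holomorphic family of
coverings of compact hyperbolic Riemann surfaces over `Y`, i.e. the characteristic
map `τ : T_s S → H⁰(X_s, N_{β_s})` is injective.  Fix a tangent vector `t`, and on
the fiber `X = X_s` (a compact space with hyperbolic area measure `μ` positive on
open sets) let: `μ2 = ‖μ_s‖² ≥ 0` be the pointwise norm of the harmonic Beltrami
differential of `t`; `φ = (□+1)⁻¹(μ2)`, i.e. `(□+1)φ = μ2`, where `□` obeys the
minimum principle; `ρ ≥ 0` the density of `β_s*ω_Y`; `g > 0` the hyperbolic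
density; and `u` the continuous representative `β_*(v_s)` of `τ t`, which vanishes
iff `τ t = 0`.  If the Weil–Petersson norm
`‖t‖²_{WP} = ∫ φ ρ dμ + ∫ ‖u‖² g dμ` vanishes, then `t = 0`. -/
theorem weil_petersson_positive_definite
    {X : Type*} [TopologicalSpace X] [CompactSpace X]
    [MeasurableSpace X] [BorelSpace X]
    (μ : Measure X) [IsFiniteMeasure μ] [μ.IsOpenPosMeasure]
    {T H0N : Type*} [AddCommGroup T] [Module ℂ T] [AddCommGroup H0N] [Module ℂ H0N]
    (τ : T →ₗ[ℂ] H0N) (hτ : Function.Injective τ)      -- effectively parametrized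
    (t : T)
    (μ2 : X → ℝ) (hμ2 : ∀ x, 0 ≤ μ2 x)                  -- `‖μ_s‖²`
    (Box : (X → ℝ) →ₗ[ℝ] (X → ℝ))
    (hmin : ∀ ψ : X → ℝ, Continuous ψ → ∀ x : X, IsMinOn ψ Set.univ x → Box ψ x ≤ 0)
    (φ : X → ℝ) (hφc : Continuous φ)
    (hφeq : ∀ x, Box φ x + φ x = μ2 x)                  -- `(□+1)φ = ‖μ_s‖²`
    (ρ : X → ℝ) (hρc : Continuous ρ) (hρ : ∀ x, 0 ≤ ρ x)  -- density of `β_s*ω_Y`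
    (g : X → ℝ) (hgc : Continuous g) (hg : ∀ x, 0 < g x)  -- hyperbolic density
    (u : X → ℂ) (hu : Continuous u)                     -- `u_s = β_*(v_s)`
    (hrep : τ t = 0 ↔ u = fun _ => 0)
    (hWP : (∫ x, φ x * ρ x ∂μ) + (∫ x, ‖u x‖ ^ 2 * g x ∂μ) = 0) :
    t = 0 := by
  -- reduce to showing u = 0
  suffices hu0 : u = fun _ => 0 by
    have : τ t = 0 := hrep.mpr hu0
    have := hτ (by simpa using this : τ t = τ 0)
    simpa using this
  cases isEmpty_or_nonempty X with
  | inl h => funext x; exact (h.false x).elim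
  | inr h =>
    -- φ ≥ 0 by the minimum principle
    obtain ⟨x₀, -, hx₀⟩ := isCompact_univ.exists_isMinOn Set.univ_nonempty hφc.continuousOn
    have hφ0 : ∀ x, 0 ≤ φ x := by
      intro x
      have h1 : Box φ x₀ ≤ 0 := hmin φ hφc x₀ hx₀
      have h2 : 0 ≤ φ x₀ := by
        have := hφeq x₀
        nlinarith [hμ2 x₀]
      exact le_trans h2 (hx₀ (Set.mem_univ x))
    have hint2 : Continuous fun x => ‖u x‖ ^ 2 * g x :=
      ((hu.norm.pow 2).mul hgc)
    have hI1 : 0 ≤ ∫ x, φ x * ρ x ∂μ :=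
      integral_nonneg fun x => mul_nonneg (hφ0 x) (hρ x)
    have hI2 : 0 ≤ ∫ x, ‖u x‖ ^ 2 * g x ∂μ :=
      integral_nonneg fun x => mul_nonneg (sq_nonneg _) (le_of_lt (hg x))
    have hI2z : ∫ x, ‖u x‖ ^ 2 * g x ∂μ = 0 := by linarith
    have hint : Integrable (fun x => ‖u x‖ ^ 2 * g x) μ := hint2.integrable_of_hasCompactSupport (isClosed_tsupport _).isCompact
    have hae : (fun x => ‖u x‖ ^ 2 * g x) =ᵐ[μ] 0 :=
      (integral_eq_zero_iff_of_nonneg (fun x => mul_nonneg (sq_nonneg _) (hg x).le) hint).mp hI2z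
    have heq : (fun x => ‖u x‖ ^ 2 * g x) = fun _ => 0 :=
      (Continuous.ae_eq_iff_eq μ hint2 continuous_const).mp hae
    funext x
    have := congrFun heq x
    have hn : ‖u x‖ ^ 2 = 0 := (mul_eq_zero.mp this).resolve_right (hg x).ne'
    have hn : ‖u x‖ = 0 := by nlinarith [norm_nonneg (u x)]
    simpa using norm_eq_zero.mp hn
end
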